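/- Let α_n → ∞, and let (x_n⁽¹⁾), (x_n⁽²⁾) ⊂ ℝ^{2N} satisfy −log|x_n⁽¹⁾ − x_n⁽²⁾|/α_n → a ∈ ℝ. Suppose (r_n) is bounded in L²(ℝ₊ × S^{2N−1}) with e^{i x_n⁽¹⁾·e^{α_n t}ω} r_n ⇀ 0 weakly in L², and e^{i x_n⁽²⁾·e^{α_n t}ω} r_n ⇀ Φ weakly in L². Then Φ(t,ω) = 0 for almost every t < a. -/

import Mathlib

open MeasureTheory Filter Metric Complex
open scoped ENNReal Topology NNReal ComplexConjugate

noncomputable section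

/-- `ℝ^{2N}`. -/
abbrev Esp (N : ℕ) := EuclideanSpace ℝ (Fin (2*N))

/-- the unit sphere `S^{2N-1}`. -/
abbrev sphereM (N : ℕ) := Metric.sphere (0 : Esp N) 1

/-- surface measure on the unit sphere. -/
def sphMeas (N : ℕ) : Measure (sphereM N) := (volume : Measure (Esp N)).toSphere

/-- measure on `ℝ₊ × S^{2N-1}`. -/
def muP (N : ℕ) : Measure (ℝ × sphereM N) :=
  ((volume : Measure ℝ).restrict (Set.Ioi 0)).prod (sphMeas N)

/-- Fourier transform `û(ξ) = ∫ e^{-ix·ξ} u(x) dx`. -/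
def fint {N : ℕ} (u : Esp N → ℂ) (ξ : Esp N) : ℂ :=
  ∫ x : Esp N, Complex.exp (-Complex.I * ((inner ℝ x ξ : ℝ) : ℂ)) * u x

/-- inverse Fourier transform `(2π)^{-2N} ∫ e^{ix·ξ} F(ξ) dξ`. -/
def invFint (N : ℕ) (F : Esp N → ℂ) (x : Esp N) : ℂ :=
  ((((2*Real.pi)^(2*N))⁻¹ : ℝ) : ℂ) *
    ∫ ξ : Esp N, Complex.exp (Complex.I * ((inner ℝ x ξ : ℝ) : ℂ)) * F ξ

/-- squared nonhomogeneous Sobolev `H^N` norm `∫ (1+|ξ|²)^N |û(ξ)|² dξ`. -/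
def sobNormSq (N : ℕ) (u : Esp N → ℂ) : ℝ :=
  ∫ ξ : Esp N, (1 + ‖ξ‖^2)^N * ‖fint u ξ‖^2

/-- `ω_{2N-1} = 2π^N/(N-1)!`, the surface measure of `S^{2N-1}`. -/
def omegaS (N : ℕ) : ℝ := 2 * Real.pi ^ N / (N-1).factorial

/-- `β_N = 2N π^{2N} 2^{2N} / ω_{2N-1}`. -/
def betaN (N : ℕ) : ℝ := 2 * N * Real.pi ^ (2*N) * 2 ^ (2*N) / omegaS N

/-- `C_N = (2π)^{-N} ω_{2N-1}^{-1/2}`. -/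
def CN (N : ℕ) : ℝ := ((2*Real.pi)^N)⁻¹ * (Real.sqrt (omegaS N))⁻¹

/-- `C̃_N = ω_{2N-1}^{1/2} (2π)^{-N}`. -/
def CtN (N : ℕ) : ℝ := Real.sqrt (omegaS N) * ((2*Real.pi)^N)⁻¹

/-- Luxemburg norm of the Orlicz space associated to `φ(s) = e^{s²}-1`. -/
def orliczNorm {d : ℕ} (u : EuclideanSpace ℝ (Fin d) → ℂ) : ℝ :=
  sInf {l : ℝ | 0 < l ∧
    (∫⁻ x, ENNReal.ofReal (Real.exp ((‖u x‖ / l)^2) - 1)) ≤ 1}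

/-- the `𝓑` norm: `sup_j (∫_S ∫_{2^j}^{2^{j+1}} |w(t,ω)|² dt dω)^{1/2}`. -/
def Bnorm (N : ℕ) (w : ℝ → Esp N → ℂ) : ℝ :=
  ⨆ j : ℤ, Real.sqrt (∫ ω : sphereM N,
    (∫ t in Set.Icc ((2:ℝ)^j) ((2:ℝ)^(j+1)), ‖w t (ω : Esp N)‖^2) ∂(sphMeas N))

/-- the modulation `e^{i x · e^{a t} ω}`. -/
def modPhase (N : ℕ) (x : Esp N) (a t : ℝ) (ω : sphereM N) : ℂ :=
  Complex.exp (Complex.I * ((inner ℝ x (Real.exp (a * t) • (ω : Esp N)) : ℝ) : ℂ))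

/-- the set `𝒫(r_n)` of weak `L²` limits of modulated subsequences. -/
def weakLimSet (N : ℕ) (α : ℕ → ℝ) (r : ℕ → ℝ → Esp N → ℂ) :
    Set (ℝ × sphereM N → ℂ) :=
  {H | MemLp H 2 (muP N) ∧ ∃ (x : ℕ → Esp N) (σ : ℕ → ℕ), StrictMono σ ∧
    ∀ g : ℝ × sphereM N → ℂ, MemLp g 2 (muP N) →
      Tendsto (fun k => ∫ p, modPhase N (x k) (α (σ k)) p.1 p.2 *
          r (σ k) p.1 (p.2 : Esp N) * conj (g p) ∂(muP N))
        atTop (𝓝 (∫ p, H p * conj (g p) ∂(muP N)))}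

/-- `η(r_n) = sup_{H ∈ 𝒫(r_n)} ‖H‖²_{L²}`. -/
def etaFn (N : ℕ) (α : ℕ → ℝ) (r : ℕ → ℝ → Esp N → ℂ) : ℝ :=
  sSup {c | ∃ H ∈ weakLimSet N α r, c = (eLpNorm H 2 (muP N)).toReal ^ 2}

/-! Test both weak limits against `g = 1_{t < b} Φ` for `b < a`. On the support of `g` the two
modulations differ by at most `|x⁽¹⁾ₙ - x⁽²⁾ₙ| e^{αₙ b}`, which tends to `0` because
`-log |x⁽¹⁾ₙ - x⁽²⁾ₙ| / αₙ → a > b`. As `(rₙ)` is bounded in `L²`, the two tested sequences then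
have the same limit, so `∫_{t < b} |Φ|² = 0`; letting `b ↑ a` gives the claim. -/

lemma ENNReal.mul_le_sq_add_sq (a b : ℝ≥0∞) : a * b ≤ a ^ 2 + b ^ 2 := by
  rcases le_total a b with hab | hab
  · calc a * b ≤ b ^ 2 := by rw [sq]; gcongr
      _ ≤ a ^ 2 + b ^ 2 := le_add_self
  · calc a * b ≤ a ^ 2 := by rw [sq]; gcongr
      _ ≤ a ^ 2 + b ^ 2 := le_self_add

section

variable {X : Type*} [MeasurableSpace X] {μ : Measure X}

lemma integrable_mul_iff_of_norm_eq_one {e h : X → ℂ} (he : AEStronglyMeasurable e μ)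
    (he_norm : ∀ x, ‖e x‖ = 1) : Integrable (fun x => e x * h x) μ ↔ Integrable h μ := by
  refine ⟨fun heh => ?_, fun hh => hh.bdd_mul he (ae_of_all _ fun x => (he_norm x).le)⟩
  have h_eq : h = fun x => conj (e x) * (e x * h x) := funext fun x => by
    rw [← mul_assoc, conj_mul', he_norm]; simp
  rw [h_eq]
  exact heh.bdd_mul (Complex.continuous_conj.comp_aestronglyMeasurable he)
    (ae_of_all _ fun x => by rw [RCLike.norm_conj, he_norm])

lemma norm_integral_mul_sub_integral_mul_le {e₁ e₂ h : X → ℂ} {δ : ℝ} (hδ : 0 ≤ δ)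
    (he₁ : AEStronglyMeasurable e₁ μ) (he₂ : AEStronglyMeasurable e₂ μ)
    (he₁_norm : ∀ x, ‖e₁ x‖ = 1) (he₂_norm : ∀ x, ‖e₂ x‖ = 1)
    (h_close : ∀ x, h x ≠ 0 → ‖e₂ x - e₁ x‖ ≤ δ) :
    ‖∫ x, e₂ x * h x ∂μ - ∫ x, e₁ x * h x ∂μ‖ ≤ δ * (∫⁻ x, ‖h x‖ₑ ∂μ).toReal := by
  by_cases hh : Integrable h μ
  · rw [← integral_sub ((integrable_mul_iff_of_norm_eq_one he₂ he₂_norm).2 hh)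
      ((integrable_mul_iff_of_norm_eq_one he₁ he₁_norm).2 hh)]
    calc ‖∫ x, (e₂ x * h x - e₁ x * h x) ∂μ‖ ≤ ∫ x, δ * ‖h x‖ ∂μ := by
          refine norm_integral_le_of_norm_le (hh.norm.const_mul δ) (ae_of_all _ fun x => ?_)
          rcases eq_or_ne (h x) 0 with hx | hx
          · simp [hx]
          · rw [← sub_mul, norm_mul]
            exact mul_le_mul_of_nonneg_right (h_close x hx) (norm_nonneg _)
      _ = δ * (∫⁻ x, ‖h x‖ₑ ∂μ).toReal := by
          rw [integral_const_mul, integral_norm_eq_lintegral_enorm hh.1]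
  · rw [integral_undef (mt (integrable_mul_iff_of_norm_eq_one he₂ he₂_norm).1 hh),
      integral_undef (mt (integrable_mul_iff_of_norm_eq_one he₁ he₁_norm).1 hh), sub_zero,
      norm_zero]
    positivity

lemma lintegral_enorm_mul_le_eLpNorm_sq_add {f g : X → ℂ} (hg : AEMeasurable g μ) :
    ∫⁻ x, ‖f x‖ₑ * ‖g x‖ₑ ∂μ ≤ eLpNorm f 2 μ ^ 2 + eLpNorm g 2 μ ^ 2 := by
  have h_sq (u : X → ℂ) : eLpNorm u 2 μ ^ 2 = ∫⁻ x, ‖u x‖ₑ ^ 2 ∂μ := by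
    simpa using eLpNorm_nnreal_pow_eq_lintegral (f := u) (μ := μ) (p := 2) two_ne_zero
  rw [h_sq, h_sq, ← lintegral_add_right' _ (hg.enorm.pow_const 2)]
  exact lintegral_mono fun x => ENNReal.mul_le_sq_add_sq _ _

lemma tendsto_integral_mul_sub_integral_mul_of_close {e₁ e₂ r : ℕ → X → ℂ} {g : X → ℂ}
    {δ : ℕ → ℝ} {M : ℝ≥0∞} (hM : M ≠ ∞) (hr : ∀ n, eLpNorm (r n) 2 μ ≤ M) (hg : MemLp g 2 μ)
    (he₁ : ∀ n, AEStronglyMeasurable (e₁ n) μ) (he₂ : ∀ n, AEStronglyMeasurable (e₂ n) μ)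
    (he₁_norm : ∀ n x, ‖e₁ n x‖ = 1) (he₂_norm : ∀ n x, ‖e₂ n x‖ = 1)
    (hδ_nonneg : ∀ n, 0 ≤ δ n) (hδ : Tendsto δ atTop (𝓝 0))
    (h_close : ∀ᶠ n in atTop, ∀ x, g x ≠ 0 → ‖e₂ n x - e₁ n x‖ ≤ δ n) :
    Tendsto (fun n => ∫ x, e₂ n x * r n x * conj (g x) ∂μ
      - ∫ x, e₁ n x * r n x * conj (g x) ∂μ) atTop (𝓝 0) := by
  let C := (M ^ 2 + eLpNorm g 2 μ ^ 2).toReal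
  have hC : M ^ 2 + eLpNorm g 2 μ ^ 2 ≠ ∞ := by
    simp [ENNReal.add_eq_top, ENNReal.pow_eq_top_iff, hM, hg.eLpNorm_ne_top]
  refine squeeze_zero_norm' ?_ (by simpa using hδ.mul_const C)
  filter_upwards [h_close] with n hn
  simp_rw [mul_assoc (e₂ n _), mul_assoc (e₁ n _)]
  refine (norm_integral_mul_sub_integral_mul_le (hδ_nonneg n) (he₁ n) (he₂ n) (he₁_norm n)
    (he₂_norm n) fun x hx => hn x (by simpa using right_ne_zero_of_mul hx)).trans
    (mul_le_mul_of_nonneg_left (ENNReal.toReal_mono hC ?_) (hδ_nonneg n))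
  calc ∫⁻ x, ‖r n x * conj (g x)‖ₑ ∂μ = ∫⁻ x, ‖r n x‖ₑ * ‖g x‖ₑ ∂μ := by simp [enorm_mul]
    _ ≤ eLpNorm (r n) 2 μ ^ 2 + eLpNorm g 2 μ ^ 2 :=
      lintegral_enorm_mul_le_eLpNorm_sq_add hg.aestronglyMeasurable.aemeasurable
    _ ≤ M ^ 2 + eLpNorm g 2 μ ^ 2 := by gcongr; exact hr n

lemma ae_eq_zero_of_integral_mul_conj_indicator_eq_zero {Φ : X → ℂ} {s : Set X}
    (hΦ : MemLp Φ 2 μ) (hs : MeasurableSet s) (h : ∫ x, Φ x * conj (s.indicator Φ x) ∂μ = 0) :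
    ∀ᵐ x ∂μ, x ∈ s → Φ x = 0 := by
  have h_eq : (fun x => Φ x * conj (s.indicator Φ x)) =
      s.indicator fun x => ((‖Φ x‖ ^ 2 : ℝ) : ℂ) := by
    ext x
    by_cases hx : x ∈ s <;> simp [hx, mul_conj']
  rw [h_eq, integral_indicator hs, integral_complex_ofReal, ofReal_eq_zero,
    integral_eq_zero_iff_of_nonneg (fun x => by positivity) hΦ.norm.integrable_sq.restrict] at h
  rw [← ae_restrict_iff' hs]
  filter_upwards [h] with x hx
  simpa using hx

lemma ae_imp_of_forall_lt {f : X → ℝ} {P : X → Prop} {a : ℝ}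
    (h : ∀ b < a, ∀ᵐ x ∂μ, f x < b → P x) : ∀ᵐ x ∂μ, f x < a → P x := by
  obtain ⟨u, -, hu_lt, hu⟩ := exists_seq_strictMono_tendsto a
  filter_upwards [ae_all_iff.2 fun n => h (u n) (hu_lt n)] with x hx hxa
  obtain ⟨n, hn⟩ := (hu.eventually (eventually_gt_nhds hxa)).exists
  exact hx n hn

end

lemma tendsto_mul_exp_mul_of_neg_log_div {ι : Type*} {l : Filter ι} {d α : ι → ℝ} {a b : ℝ}
    (hd : ∀ i, 0 ≤ d i) (hα : Tendsto α l atTop)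
    (ha : Tendsto (fun i => -Real.log (d i) / α i) l (𝓝 a)) (hb : b < a) :
    Tendsto (fun i => d i * Real.exp (α i * b)) l (𝓝 0) := by
  have h_exp : Tendsto (fun i => Real.exp (α i * (b - -Real.log (d i) / α i))) l (𝓝 0) :=
    Real.tendsto_exp_atBot.comp (hα.atTop_mul_neg (sub_neg.2 hb) (tendsto_const_nhds.sub ha))
  refine squeeze_zero' (Eventually.of_forall fun i => mul_nonneg (hd i) (Real.exp_pos _).le) ?_
    h_exp
  filter_upwards [hα.eventually_gt_atTop 0] with i hi
  calc d i * Real.exp (α i * b) ≤ Real.exp (Real.log (d i)) * Real.exp (α i * b) := by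
        gcongr; exact Real.le_exp_log _
    _ = Real.exp (α i * (b - -Real.log (d i) / α i)) := by
        rw [← Real.exp_add]; congr 1; field_simp; ring

lemma Complex.norm_exp_I_mul_ofReal_sub_exp_I_mul_ofReal_le (θ₁ θ₂ : ℝ) :
    ‖exp (I * θ₂) - exp (I * θ₁)‖ ≤ |θ₂ - θ₁| := by
  have h_eq : exp (I * θ₂) - exp (I * θ₁) = exp (I * θ₁) * (exp (I * ↑(θ₂ - θ₁)) - 1) := by
    rw [mul_sub, ← exp_add]; push_cast; ring_nf
  rw [h_eq, norm_mul, norm_exp_I_mul_ofReal, one_mul, ← Real.norm_eq_abs]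
  exact Real.norm_exp_I_mul_ofReal_sub_one_le

lemma norm_modPhase (N : ℕ) (x : Esp N) (a t : ℝ) (ω : sphereM N) :
    ‖modPhase N x a t ω‖ = 1 :=
  norm_exp_I_mul_ofReal _

lemma continuous_modPhase (N : ℕ) (x : Esp N) (a : ℝ) :
    Continuous fun p : ℝ × sphereM N => modPhase N x a p.1 p.2 := by
  unfold modPhase
  fun_prop

lemma norm_modPhase_sub_le (N : ℕ) (x y : Esp N) (a t : ℝ) (ω : sphereM N) :
    ‖modPhase N y a t ω - modPhase N x a t ω‖ ≤ ‖y - x‖ * Real.exp (a * t) := by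
  refine (norm_exp_I_mul_ofReal_sub_exp_I_mul_ofReal_le _ _).trans ?_
  rw [← inner_sub_left]
  refine (abs_real_inner_le_norm _ _).trans_eq ?_
  rw [norm_smul, norm_eq_of_mem_sphere ω, mul_one, Real.norm_of_nonneg (Real.exp_pos _).le]

theorem stmt17_general (N : ℕ) (α : ℕ → ℝ)
    (hα : Tendsto α atTop atTop)
    (x₁ x₂ : ℕ → Esp N) (a : ℝ)
    (ha : Tendsto (fun n => -Real.log ‖x₁ n - x₂ n‖ / α n) atTop (𝓝 a))
    (r : ℕ → ℝ × sphereM N → ℂ)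
    (hbd : ∃ M : ℝ≥0∞, M < ⊤ ∧ ∀ n, eLpNorm (r n) 2 (muP N) ≤ M)
    (Φ : ℝ × sphereM N → ℂ) (hΦ : MemLp Φ 2 (muP N))
    (h1 : ∀ g : ℝ × sphereM N → ℂ, MemLp g 2 (muP N) →
      Tendsto (fun n => ∫ p, modPhase N (x₁ n) (α n) p.1 p.2 * r n p *
          conj (g p) ∂(muP N)) atTop (𝓝 0))
    (h2 : ∀ g : ℝ × sphereM N → ℂ, MemLp g 2 (muP N) →
      Tendsto (fun n => ∫ p, modPhase N (x₂ n) (α n) p.1 p.2 * r n p *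
          conj (g p) ∂(muP N)) atTop (𝓝 (∫ p, Φ p * conj (g p) ∂(muP N)))) :
    ∀ᵐ p ∂(muP N), p.1 < a → Φ p = 0 := by
  obtain ⟨M, hM, hr⟩ := hbd
  refine ae_imp_of_forall_lt fun b hb => ?_
  have hs : MeasurableSet {p : ℝ × sphereM N | p.1 < b} := measurable_fst measurableSet_Iio
  set g := {p : ℝ × sphereM N | p.1 < b}.indicator Φ
  have hg : MemLp g 2 (muP N) := hΦ.indicator hs
  have hδ : Tendsto (fun n => ‖x₁ n - x₂ n‖ * Real.exp (α n * b)) atTop (𝓝 0) :=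
    tendsto_mul_exp_mul_of_neg_log_div (fun n => norm_nonneg _) hα ha hb
  have h_close : ∀ᶠ n in atTop, ∀ p, g p ≠ 0 → ‖modPhase N (x₂ n) (α n) p.1 p.2
      - modPhase N (x₁ n) (α n) p.1 p.2‖ ≤ ‖x₁ n - x₂ n‖ * Real.exp (α n * b) := by
    filter_upwards [hα.eventually_ge_atTop 0] with n hn p hp
    have hpb : p ∈ {q : ℝ × sphereM N | q.1 < b} := Set.mem_of_indicator_ne_zero hp
    rw [norm_sub_rev (x₁ n)]
    exact (norm_modPhase_sub_le ..).trans (by gcongr; exact hpb.le)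
  have h_diff := tendsto_integral_mul_sub_integral_mul_of_close hM.ne hr hg
    (fun n => (continuous_modPhase N (x₁ n) (α n)).aestronglyMeasurable)
    (fun n => (continuous_modPhase N (x₂ n) (α n)).aestronglyMeasurable)
    (fun n p => norm_modPhase ..) (fun n p => norm_modPhase ..)
    (fun n => by positivity) hδ h_close
  have h_zero : ∫ p, Φ p * conj (g p) ∂(muP N) = 0 :=
    tendsto_nhds_unique (h2 g hg) (by simpa using h_diff.add (h1 g hg))
  exact ae_eq_zero_of_integral_mul_conj_indicator_eq_zero hΦ hs h_zero

/-- Orthogonality of profiles: if the remainder modulated along `x⁽¹⁾` converges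
weakly to `0` while modulated along `x⁽²⁾` it converges weakly to `Φ`, and
`-log|x_n⁽¹⁾ - x_n⁽²⁾|/α_n → a`, then `Φ(t,ω) = 0` for a.e. `t < a`. -/
theorem stmt17 (N : ℕ) (hN : 1 ≤ N) (α : ℕ → ℝ) (hα0 : ∀ n, 0 < α n)
    (hα : Tendsto α atTop atTop)
    (x₁ x₂ : ℕ → Esp N) (hne : ∀ n, x₁ n ≠ x₂ n) (a : ℝ)
    (ha : Tendsto (fun n => -Real.log ‖x₁ n - x₂ n‖ / α n) atTop (𝓝 a))
    (r : ℕ → ℝ × sphereM N → ℂ)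
    (hbd : ∃ M : ℝ≥0∞, M < ⊤ ∧ ∀ n, eLpNorm (r n) 2 (muP N) ≤ M)
    (Φ : ℝ × sphereM N → ℂ) (hΦ : MemLp Φ 2 (muP N))
    (h1 : ∀ g : ℝ × sphereM N → ℂ, MemLp g 2 (muP N) →
      Tendsto (fun n => ∫ p, modPhase N (x₁ n) (α n) p.1 p.2 * r n p *
          conj (g p) ∂(muP N)) atTop (𝓝 0))
    (h2 : ∀ g : ℝ × sphereM N → ℂ, MemLp g 2 (muP N) →
      Tendsto (fun n => ∫ p, modPhase N (x₂ n) (α n) p.1 p.2 * r n p *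
          conj (g p) ∂(muP N)) atTop (𝓝 (∫ p, Φ p * conj (g p) ∂(muP N)))) :
    ∀ᵐ p ∂(muP N), p.1 < a → Φ p = 0 :=
  stmt17_general N α hα x₁ x₂ a ha r hbd Φ hΦ h1 h2
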